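/- arXiv:1712.10067 — 2 statements merged into one kernel-verified Lean document; each statement's English description precedes it below -/
import Mathlib

section
/- Let ε > 0 with ε‖D‖₂ < 1, and suppose λ is a boundary point of the ε-spectral value set σ_ε(A,B,C,D,E) with λ ∉ spec(A,E). If Δ ∈ ℂ^{m×p} satisfies ‖Δ‖₂ ≤ ε and λ ∈ spec(M(Δ),E), then ‖Δ‖₂ = ε. -/
open Matrix Filter Set

noncomputable def specNorm {p m : ℕ} (A : Matrix (Fin p) (Fin m) ℂ) : ℝ :=
  ‖(Matrix.toEuclideanLin A).toContinuousLinearMap‖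

noncomputable def pertSys {n m p : ℕ} (A : Matrix (Fin n) (Fin n) ℂ) (B : Matrix (Fin n) (Fin m) ℂ)
    (C : Matrix (Fin p) (Fin n) ℂ) (D : Matrix (Fin p) (Fin m) ℂ)
    (Δ : Matrix (Fin m) (Fin p) ℂ) : Matrix (Fin n) (Fin n) ℂ :=
  A + B * Δ * (1 - D * Δ)⁻¹ * C

noncomputable def svSet {n m p : ℕ} (ε : ℝ) (A : Matrix (Fin n) (Fin n) ℂ)
    (B : Matrix (Fin n) (Fin m) ℂ) (C : Matrix (Fin p) (Fin n) ℂ)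
    (D : Matrix (Fin p) (Fin m) ℂ) (E : Matrix (Fin n) (Fin n) ℂ) : Set ℂ :=
  {z | ∃ Δ : Matrix (Fin m) (Fin p) ℂ, specNorm Δ ≤ ε ∧ (z • E - pertSys A B C D Δ).det = 0}

noncomputable def transferFn {n m p : ℕ} (A : Matrix (Fin n) (Fin n) ℂ)
    (B : Matrix (Fin n) (Fin m) ℂ) (C : Matrix (Fin p) (Fin n) ℂ)
    (D : Matrix (Fin p) (Fin m) ℂ) (E : Matrix (Fin n) (Fin n) ℂ) (z : ℂ) :
    Matrix (Fin p) (Fin m) ℂ :=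
  C * (z • E - A)⁻¹ * B + D

/-! If some `Δ` with `‖Δ‖₂ < ε` puts `z` into `σ_ε`, then, `zE - A` and `I - DΔ` being invertible,
`det (zE - M(Δ)) * det (I - DΔ) = det (zE - A) * det (I - G(z)Δ)` forces `I - G(z)Δ` to be
singular, so `‖G(z)‖₂ ≥ ‖Δ‖₂⁻¹ > ε⁻¹`. This strict inequality persists near `z` by continuity
of `G`, and wherever `‖G(w)‖₂ > ε⁻¹` a rank-one `Δ_w` of norm `< ε` with `Δ_w (G(w) x) = x`
makes `I - G(w)Δ_w` singular, so `w ∈ σ_ε`. Hence `z` would be an interior point. -/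

section RankOne

variable {𝕜 E F : Type*} [RCLike 𝕜] [NormedAddCommGroup E] [NormedSpace 𝕜 E]
  [NormedAddCommGroup F] [NormedSpace 𝕜 F]

theorem ContinuousLinearMap.exists_apply_eq_norm_eq_div {y : E} (hy : y ≠ 0) (u : F) :
    ∃ T : E →L[𝕜] F, T y = u ∧ ‖T‖ = ‖u‖ / ‖y‖ := by
  obtain ⟨g, hg, hgy⟩ := exists_dual_vector 𝕜 y (norm_ne_zero_iff.2 hy)
  have hy' : (‖y‖ : 𝕜) ≠ 0 := RCLike.ofReal_ne_zero.2 (norm_ne_zero_iff.2 hy)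
  refine ⟨(‖y‖⁻¹ : 𝕜) • g.smulRight u, ?_, ?_⟩
  · simp [hgy, hy']
  · rw [norm_smul, norm_smulRight_apply, hg]
    simp [div_eq_inv_mul]

end RankOne

open scoped Matrix.Norms.L2Operator

namespace Matrix

theorem det_sub_mul_mul_inv_mul_mul_det {R : Type*} [CommRing R] {n m p : Type*}
    [Fintype n] [Fintype m] [Fintype p] [DecidableEq n] [DecidableEq m] [DecidableEq p]
    (S : Matrix n n R) (B : Matrix n m R) (C : Matrix p n R) (D : Matrix p m R)
    (Δ : Matrix m p R) (hS : IsUnit S.det) (hD : IsUnit (1 - D * Δ).det) :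
    (S - B * Δ * (1 - D * Δ)⁻¹ * C).det * (1 - D * Δ).det
      = S.det * (1 - (C * S⁻¹ * B + D) * Δ).det := by
  set K := (1 - D * Δ)⁻¹
  set H := C * S⁻¹ * B
  have hKD : (1 - D * Δ) * K = 1 := mul_nonsing_inv _ hD
  have hfactor : (1 - D * Δ) * (1 - K * H * Δ) = 1 - (H + D) * Δ := by
    rw [Matrix.mul_sub, Matrix.mul_one, ← Matrix.mul_assoc, ← Matrix.mul_assoc, hKD,
      Matrix.one_mul, Matrix.add_mul]
    abel
  have hsplit : S - B * Δ * K * C = S + -B * (Δ * K * C) := by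
    simp only [Matrix.neg_mul, Matrix.mul_assoc, sub_eq_add_neg]
  calc (S - B * Δ * K * C).det * (1 - D * Δ).det
      = S.det * ((1 - D * Δ).det * (1 - Δ * (K * H)).det) := by
        rw [hsplit, det_add_mul _ _ hS]
        simp only [H, Matrix.mul_neg, Matrix.mul_assoc, ← sub_eq_add_neg]
        ring
    _ = S.det * (1 - (H + D) * Δ).det := by
        rw [det_one_sub_mul_comm Δ, ← det_mul, hfactor]

variable {𝕜 : Type*} [RCLike 𝕜] {m n : Type*} [Fintype m] [Fintype n] [DecidableEq m]
  [DecidableEq n]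

theorem det_one_sub_ne_zero_of_norm_lt_one {X : Matrix n n 𝕜} (hX : ‖X‖ < 1) :
    (1 - X).det ≠ 0 :=
  ((isUnit_iff_isUnit_det _).1 (Units.oneSub X hX).isUnit).ne_zero

theorem det_one_sub_mul_ne_zero_of_norm_le {D : Matrix m n 𝕜} {Δ : Matrix n m 𝕜} {ε : ℝ}
    (hεD : ε * ‖D‖ < 1) (hΔ : ‖Δ‖ ≤ ε) : (1 - D * Δ).det ≠ 0 := by
  refine det_one_sub_ne_zero_of_norm_lt_one ((l2_opNorm_mul D Δ).trans_lt ?_)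
  calc ‖D‖ * ‖Δ‖ ≤ ‖D‖ * ε := mul_le_mul_of_nonneg_left hΔ (norm_nonneg D)
    _ < 1 := by rwa [mul_comm]

theorem one_le_norm_mul_norm_of_det_one_sub_mul_eq_zero {G : Matrix m n 𝕜} {Δ : Matrix n m 𝕜}
    (h : (1 - G * Δ).det = 0) : 1 ≤ ‖G‖ * ‖Δ‖ := by
  by_contra! hlt
  exact det_one_sub_ne_zero_of_norm_lt_one ((l2_opNorm_mul G Δ).trans_lt hlt) h

theorem exists_norm_lt_det_one_sub_mul_eq_zero {G : Matrix m n 𝕜} {r : ℝ} (hr : 0 < r)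
    (hG : r⁻¹ < ‖G‖) : ∃ Δ : Matrix n m 𝕜, ‖Δ‖ < r ∧ (1 - G * Δ).det = 0 := by
  let e : Matrix m n 𝕜 ≃ₗ[𝕜] _ :=
    toEuclideanLin.trans (LinearMap.toContinuousLinearMap (𝕜 := 𝕜))
  let e' : Matrix n m 𝕜 ≃ₗ[𝕜] _ :=
    toEuclideanLin.trans (LinearMap.toContinuousLinearMap (𝕜 := 𝕜))
  obtain ⟨x, hx1, hGx⟩ := (e G).exists_lt_apply_of_lt_opNorm hG
  have hy : e G x ≠ 0 := norm_pos_iff.1 ((inv_pos.2 hr).trans hGx)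
  obtain ⟨T, hTy, hT⟩ := ContinuousLinearMap.exists_apply_eq_norm_eq_div (𝕜 := 𝕜) hy x
  refine ⟨e'.symm T, ?_, ?_⟩
  · rw [l2_opNorm_def, LinearEquiv.apply_symm_apply, hT, div_lt_iff₀ (norm_pos_iff.2 hy)]
    calc ‖x‖ < 1 := hx1
      _ = r * r⁻¹ := (mul_inv_cancel₀ hr.ne').symm
      _ < r * ‖e G x‖ := mul_lt_mul_of_pos_left hGx hr
  · rw [← exists_mulVec_eq_zero_iff]
    refine ⟨WithLp.ofLp (e G x), by simpa using hy, ?_⟩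
    have hΔ : e'.symm T *ᵥ WithLp.ofLp (e G x) = WithLp.ofLp x := by
      change WithLp.ofLp (e' (e'.symm T) (e G x)) = _
      rw [LinearEquiv.apply_symm_apply, hTy]
    rw [sub_mulVec, one_mulVec, ← mulVec_mulVec, hΔ, sub_eq_zero]
    rfl

end Matrix

section SpectralValueSet

theorem specNorm_eq_norm {k l : ℕ} (X : Matrix (Fin k) (Fin l) ℂ) : specNorm X = ‖X‖ := rfl

variable {n m p : ℕ} (A : Matrix (Fin n) (Fin n) ℂ) (B : Matrix (Fin n) (Fin m) ℂ)
  (C : Matrix (Fin p) (Fin n) ℂ) (D : Matrix (Fin p) (Fin m) ℂ) (E : Matrix (Fin n) (Fin n) ℂ)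

theorem det_sub_pertSys_eq_zero_iff {z : ℂ} {Δ : Matrix (Fin m) (Fin p) ℂ}
    (hz : (z • E - A).det ≠ 0) (hD : (1 - D * Δ).det ≠ 0) :
    (z • E - pertSys A B C D Δ).det = 0 ↔ (1 - transferFn A B C D E z * Δ).det = 0 := by
  have h := Matrix.det_sub_mul_mul_inv_mul_mul_det (z • E - A) B C D Δ hz.isUnit hD.isUnit
  rw [← mul_eq_zero_iff_right hD, pertSys, sub_add_eq_sub_sub, h, mul_eq_zero_iff_left hz,
    transferFn]

theorem continuousAt_transferFn {z : ℂ} (hz : (z • E - A).det ≠ 0) :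
    ContinuousAt (transferFn A B C D E) z := by
  have hinv : ContinuousAt Ring.inverse (z • E - A).det := by
    rw [Ring.inverse_eq_inv']
    exact continuousAt_inv₀ hz
  have hres : ContinuousAt (fun w : ℂ => (w • E - A)⁻¹) z :=
    (continuousAt_matrix_inv _ hinv).comp (f := fun w : ℂ => w • E - A) (by fun_prop)
  unfold transferFn
  fun_prop

theorem mem_svSet_of_inv_lt_specNorm_transferFn {ε : ℝ} (hε : 0 < ε)
    (hεD : ε * specNorm D < 1) {w : ℂ} (hw : (w • E - A).det ≠ 0)
    (hG : ε⁻¹ < specNorm (transferFn A B C D E w)) : w ∈ svSet ε A B C D E := by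
  obtain ⟨Δ, hΔ, hdet⟩ := Matrix.exists_norm_lt_det_one_sub_mul_eq_zero hε hG
  have hD := Matrix.det_one_sub_mul_ne_zero_of_norm_le hεD hΔ.le
  exact ⟨Δ, hΔ.le, (det_sub_pertSys_eq_zero_iff A B C D E hw hD).2 hdet⟩

theorem mem_interior_svSet_of_inv_lt_specNorm_transferFn {ε : ℝ} (hε : 0 < ε)
    (hεD : ε * specNorm D < 1) {z : ℂ} (hz : (z • E - A).det ≠ 0)
    (hG : ε⁻¹ < specNorm (transferFn A B C D E z)) : z ∈ interior (svSet ε A B C D E) := by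
  have hdet : ∀ᶠ w in nhds z, (w • E - A).det ≠ 0 :=
    (by fun_prop : Continuous fun w : ℂ => (w • E - A).det).continuousAt.eventually_ne hz
  have hnorm : ∀ᶠ w in nhds z, ε⁻¹ < specNorm (transferFn A B C D E w) :=
    (continuous_norm.continuousAt.comp (continuousAt_transferFn A B C D E hz)).eventually
      (lt_mem_nhds hG)
  refine mem_interior_iff_mem_nhds.2 ?_
  filter_upwards [hdet, hnorm] with w hw hGw
  exact mem_svSet_of_inv_lt_specNorm_transferFn A B C D E hε hεD hw hGw

theorem inv_lt_specNorm_transferFn_of_specNorm_lt {ε : ℝ} (hεD : ε * specNorm D < 1) {z : ℂ}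
    (hz : (z • E - A).det ≠ 0) {Δ : Matrix (Fin m) (Fin p) ℂ} (hΔ : specNorm Δ < ε)
    (hzΔ : (z • E - pertSys A B C D Δ).det = 0) :
    ε⁻¹ < specNorm (transferFn A B C D E z) := by
  set G := transferFn A B C D E z
  have hD := Matrix.det_one_sub_mul_ne_zero_of_norm_le hεD hΔ.le
  have h1 : 1 ≤ ‖G‖ * ‖Δ‖ := Matrix.one_le_norm_mul_norm_of_det_one_sub_mul_eq_zero
    ((det_sub_pertSys_eq_zero_iff A B C D E hz hD).1 hzΔ)
  have hG : 0 < ‖G‖ := pos_of_mul_pos_left (one_pos.trans_le h1) (norm_nonneg Δ)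
  rw [specNorm_eq_norm, inv_lt_iff_one_lt_mul₀ ((norm_nonneg Δ).trans_lt hΔ)]
  exact h1.trans_lt (mul_lt_mul_of_pos_left hΔ hG)

end SpectralValueSet

theorem boundary_perturbation_norm_general {n m p : ℕ} (A : Matrix (Fin n) (Fin n) ℂ)
    (B : Matrix (Fin n) (Fin m) ℂ) (C : Matrix (Fin p) (Fin n) ℂ)
    (D : Matrix (Fin p) (Fin m) ℂ) (E : Matrix (Fin n) (Fin n) ℂ)
    (ε : ℝ) (hεD : ε * specNorm D < 1)
    (z : ℂ) (hzb : z ∈ frontier (svSet ε A B C D E)) (hz : (z • E - A).det ≠ 0)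
    (Δ : Matrix (Fin m) (Fin p) ℂ) (hΔ : specNorm Δ ≤ ε)
    (hzΔ : (z • E - pertSys A B C D Δ).det = 0) :
    specNorm Δ = ε := by
  by_contra hne
  have hΔlt : specNorm Δ < ε := hΔ.lt_of_ne hne
  have hε : 0 < ε := (norm_nonneg Δ).trans_lt hΔlt
  exact hzb.2 <| mem_interior_svSet_of_inv_lt_specNorm_transferFn A B C D E hε hεD hz <|
    inv_lt_specNorm_transferFn_of_specNorm_lt A B C D E hεD hz hΔlt hzΔ

theorem boundary_perturbation_norm {n m p : ℕ} (A : Matrix (Fin n) (Fin n) ℂ)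
    (B : Matrix (Fin n) (Fin m) ℂ) (C : Matrix (Fin p) (Fin n) ℂ)
    (D : Matrix (Fin p) (Fin m) ℂ) (E : Matrix (Fin n) (Fin n) ℂ)
    (hE : IsUnit E) (ε : ℝ) (hε : 0 < ε) (hεD : ε * specNorm D < 1)
    (z : ℂ) (hzb : z ∈ frontier (svSet ε A B C D E)) (hz : (z • E - A).det ≠ 0)
    (Δ : Matrix (Fin m) (Fin p) ℂ) (hΔ : specNorm Δ ≤ ε)
    (hzΔ : (z • E - pertSys A B C D Δ).det = 0) :
    specNorm Δ = ε :=
  boundary_perturbation_norm_general A B C D E ε hεD z hzb hz Δ hΔ hzΔ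
end

section
/- Let ε > 0 with ε‖D‖₂ < 1, E invertible, (A,E) regular, and let λ ∉ spec(A,E) satisfy ‖G(λ)‖₂ > ε⁻¹ where G(λ) = C(λE - A)⁻¹B + D. Then there exists Δ ∈ ℂ^{m×p} with ‖Δ‖₂ < ε such that λ ∈ spec(M(Δ),E); in particular λ lies in σ_{ε'}(A,B,C,D,E) for some ε' < ε. -/
open Matrix Filter Set

/-!
The transfer function is the Schur-complement link between the two singularity problems: if
`G(z) Δ w = w` with `w ≠ 0`, then `x = (zE - A)⁻¹ B Δ w` is a nonzero kernel vector of
`zE - M(Δ)`, provided `1 - DΔ` is invertible. A singular `1 - G(z) Δ` is reached at cost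
`‖Δ‖ = ‖G(z)‖⁻¹` by `Δ = ‖G(z)‖⁻² G(z)ᴴ`, because the positive matrix `G Gᴴ` has its norm
`‖G‖²` in its spectrum. Finally `‖Δ‖ < ε` and `ε ‖D‖ < 1` make `1 - DΔ` invertible.
-/

open scoped Matrix.Norms.L2Operator MatrixOrder ComplexOrder

theorem specNorm_eq_l2_opNorm {p m : ℕ} (A : Matrix (Fin p) (Fin m) ℂ) : specNorm A = ‖A‖ :=
  rfl

theorem Matrix.exists_l2_opNorm_eq_inv_not_isUnit_one_sub_mul {ι κ : Type*} [Fintype ι]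
    [Fintype κ] [DecidableEq ι] [DecidableEq κ] {G : Matrix ι κ ℂ} (hG : G ≠ 0) :
    ∃ Δ : Matrix κ ι ℂ, ‖Δ‖ = ‖G‖⁻¹ ∧ ¬IsUnit (1 - G * Δ) := by
  have : Nonempty ι := by
    by_contra h
    exact hG (Matrix.ext fun i => (not_nonempty_iff.1 h).elim i)
  have hG₀ : ‖G‖ ≠ 0 := norm_ne_zero_iff.2 hG
  set c : ℂ := ((‖G‖ ^ 2 : ℝ) : ℂ) with hc_def
  have hc : c ≠ 0 := by simpa [c] using hG₀
  refine ⟨c⁻¹ • Gᴴ, ?_, ?_⟩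
  · rw [norm_smul, l2_opNorm_conjTranspose]
    simp only [c, norm_inv, norm_pow, Complex.norm_real, norm_norm]
    field_simp
  have hspec := CStarAlgebra.norm_mem_spectrum_of_nonneg
    (posSemidef_self_mul_conjTranspose G).nonneg
  have hnorm : ‖G * Gᴴ‖ = ‖G‖ ^ 2 := by
    simpa [l2_opNorm_conjTranspose, sq] using l2_opNorm_conjTranspose_mul_self Gᴴ
  have hfactor : algebraMap ℝ _ (‖G‖ ^ 2) - G * Gᴴ = c • (1 - G * (c⁻¹ • Gᴴ)) := by
    rw [smul_sub, Matrix.mul_smul, smul_smul, mul_inv_cancel₀ hc, one_smul,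
      Algebra.algebraMap_eq_smul_one, hc_def, Complex.coe_smul]
  rwa [spectrum.mem_iff, hnorm, hfactor, ← Units.smul_mk0 hc, isUnit_smul_iff] at hspec

theorem det_smul_sub_pertSys_eq_zero {n m p : ℕ} (A : Matrix (Fin n) (Fin n) ℂ)
    (B : Matrix (Fin n) (Fin m) ℂ) (C : Matrix (Fin p) (Fin n) ℂ)
    (D : Matrix (Fin p) (Fin m) ℂ) (E : Matrix (Fin n) (Fin n) ℂ)
    (Δ : Matrix (Fin m) (Fin p) ℂ) {z : ℂ} (hz : (z • E - A).det ≠ 0)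
    (hK : IsUnit (1 - D * Δ)) (hG : ¬IsUnit (1 - transferFn A B C D E z * Δ)) :
    (z • E - pertSys A B C D Δ).det = 0 := by
  rw [Matrix.isUnit_iff_isUnit_det, isUnit_iff_ne_zero, not_not] at hG
  obtain ⟨w, hw₀, hw⟩ := Matrix.exists_mulVec_eq_zero_iff.2 hG
  set v := Δ *ᵥ w
  set x := (z • E - A)⁻¹ *ᵥ (B *ᵥ v)
  have hx : (z • E - A) *ᵥ x = B *ᵥ v := by
    rw [mulVec_mulVec, mul_nonsing_inv _ (isUnit_iff_ne_zero.2 hz), one_mulVec]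
  have hCx : C *ᵥ x + D *ᵥ v = w := by
    rw [sub_mulVec, one_mulVec, ← mulVec_mulVec, sub_eq_zero] at hw
    rw [eq_comm, hw, transferFn, add_mulVec, ← mulVec_mulVec, ← mulVec_mulVec]
  have hKw : (1 - D * Δ)⁻¹ *ᵥ (C *ᵥ x) = w := by
    have : (1 - D * Δ) *ᵥ w = C *ᵥ x := by
      rw [sub_mulVec, one_mulVec, ← mulVec_mulVec]
      exact (eq_sub_of_add_eq hCx).symm
    rw [← this, mulVec_mulVec, nonsing_inv_mul _ ((isUnit_iff_isUnit_det _).1 hK), one_mulVec]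
  refine Matrix.exists_mulVec_eq_zero_iff.1 ⟨x, fun hx₀ => hw₀ ?_, ?_⟩
  · rw [← hKw, hx₀, mulVec_zero, mulVec_zero]
  · rw [pertSys, ← sub_sub, sub_mulVec, hx, ← mulVec_mulVec, ← mulVec_mulVec, ← mulVec_mulVec,
      hKw, sub_self]

theorem strict_interior_perturbation_general {n m p : ℕ} (A : Matrix (Fin n) (Fin n) ℂ)
    (B : Matrix (Fin n) (Fin m) ℂ) (C : Matrix (Fin p) (Fin n) ℂ)
    (D : Matrix (Fin p) (Fin m) ℂ) (E : Matrix (Fin n) (Fin n) ℂ)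
    (ε : ℝ) (hε : 0 < ε) (hεD : ε * specNorm D < 1)
    (z : ℂ) (hz : (z • E - A).det ≠ 0)
    (hG : ε⁻¹ < specNorm (transferFn A B C D E z)) :
    (∃ Δ : Matrix (Fin m) (Fin p) ℂ, specNorm Δ < ε ∧
      (z • E - pertSys A B C D Δ).det = 0) ∧
    ∃ ε' : ℝ, 0 ≤ ε' ∧ ε' < ε ∧ z ∈ svSet ε' A B C D E := by
  simp only [svSet, specNorm_eq_l2_opNorm] at hεD hG ⊢
  have hG₀ : transferFn A B C D E z ≠ 0 :=
    norm_pos_iff.1 ((inv_pos.2 hε).trans hG)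
  obtain ⟨Δ, hΔ, hsing⟩ := exists_l2_opNorm_eq_inv_not_isUnit_one_sub_mul hG₀
  have hΔε : ‖Δ‖ < ε := hΔ ▸ inv_lt_of_inv_lt₀ hε hG
  have hK : IsUnit (1 - D * Δ) := isUnit_one_sub_of_norm_lt_one <| calc
    ‖D * Δ‖ ≤ ‖D‖ * ‖Δ‖ := l2_opNorm_mul D Δ
    _ ≤ ‖D‖ * ε := by gcongr
    _ < 1 := by linarith
  have hdet := det_smul_sub_pertSys_eq_zero A B C D E Δ hz hK hsing
  exact ⟨⟨Δ, hΔε, hdet⟩, ‖Δ‖, norm_nonneg _, hΔε, Δ, le_rfl, hdet⟩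

theorem strict_interior_perturbation {n m p : ℕ} (A : Matrix (Fin n) (Fin n) ℂ)
    (B : Matrix (Fin n) (Fin m) ℂ) (C : Matrix (Fin p) (Fin n) ℂ)
    (D : Matrix (Fin p) (Fin m) ℂ) (E : Matrix (Fin n) (Fin n) ℂ)
    (hE : IsUnit E) (hreg : ∃ w : ℂ, (w • E - A).det ≠ 0)
    (ε : ℝ) (hε : 0 < ε) (hεD : ε * specNorm D < 1)
    (z : ℂ) (hz : (z • E - A).det ≠ 0)
    (hG : ε⁻¹ < specNorm (transferFn A B C D E z)) :
    (∃ Δ : Matrix (Fin m) (Fin p) ℂ, specNorm Δ < ε ∧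
      (z • E - pertSys A B C D Δ).det = 0) ∧
    ∃ ε' : ℝ, 0 ≤ ε' ∧ ε' < ε ∧ z ∈ svSet ε' A B C D E :=
  strict_interior_perturbation_general A B C D E ε hε hεD z hz hG
end
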